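/- Suppose A N = N. Let C := {X ∈ V : g(X,N) = 0, g(X,ξ) = 0}, T_λ := {X ∈ C : A X = X}, T_μ := {X ∈ C : A X = -X}, T := {Y ∈ V : g(Y,N) = 0}, let α, λ ∈ ℝ, and let S : T → T be the real-linear map with Sξ = αξ, S X = λX for X ∈ T_λ and S X = 0 for X ∈ T_μ. For X ∈ C define R_X : T → T by R_X Y := g(X,X)Y - g(X,Y)X + 3g(J X,Y)J X + g(A X,X)A Y - g(A X,Y)A X + g(J A X, X)J A Y + g(A J X, Y)J A X + g(S X,X)S Y - g(S X,Y)S X, and define R̄_N : T → T by R̄_N Y := Y + 2η(Y)ξ + A Y with η(Y) := g(Y,ξ). Then for every X ∈ T_λ ∪ T_μ, R̄_N ∘ R_X = R_X ∘ R̄_N. -/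

import Mathlib

/-!
On the tangent space `T = N^⊥` the normal Jacobi operator `R̄_N = id + A + 2 η ⊗ ξ` is
`g`-self-adjoint and commutes with `A` (because `Aξ = -ξ`). If `AX = εX` with `X ⊥ N, ξ`, then
`X` and `JX` are eigenvectors of `R̄_N`, with eigenvalues `1 + ε` and `1 - ε`, and so are `AX`,
`JAX` and `SX`, which are multiples of them. On `T` the shape operator is
`S = α η ⊗ ξ + (λ/2)(id + A)`. Hence every term of `R_X` is a multiple of `id`, `A`, `S`, or of
a rank-one map `g(v, ·) v` along an eigenvector `v` of the self-adjoint `R̄_N`, and each of these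
commutes with `R̄_N` on `T`; the term `g(JAX, X) JAY` vanishes because `g(JX, X) = 0`.
-/

noncomputable section

variable {V : Type*}

/-- The real inner product `g(x,y) = Re⟨x,y⟩` induced by the Hermitian inner product. -/
def g [NormedAddCommGroup V] [InnerProductSpace ℂ V] (x y : V) : ℝ := (inner ℂ x y : ℂ).re

/-- The Jacobi operator `R_X` of the type-B tube, obtained from the Gauss equation. -/
def RXop [NormedAddCommGroup V] [InnerProductSpace ℂ V]
    (A S : V →ₗ[ℝ] V) (X Y : V) : V :=
  g X X • Y - g X Y • X + (3 * g (Complex.I • X) Y) • (Complex.I • X)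
    + g (A X) X • A Y - g (A X) Y • A X
    + g (Complex.I • A X) X • (Complex.I • A Y)
    + g (A (Complex.I • X)) Y • (Complex.I • A X)
    + g (S X) X • S Y - g (S X) Y • S X

/-- The normal Jacobi operator of an 𝔄-principal hypersurface:
`R̄_N Y = Y + 2η(Y)ξ + AY`. -/
def RNop [NormedAddCommGroup V] [InnerProductSpace ℂ V]
    (A : V →ₗ[ℝ] V) (ξ Y : V) : V :=
  Y + (2 * g Y ξ) • ξ + A Y

section RealInner

variable [NormedAddCommGroup V] [InnerProductSpace ℂ V]

lemma g_comm (x y : V) : g x y = g y x := by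
  simp only [g, ← inner_conj_symm x y, Complex.conj_re]

lemma g_add_left (x y z : V) : g (x + y) z = g x z + g y z := by
  simp [g]

lemma g_add_right (x y z : V) : g x (y + z) = g x y + g x z := by
  simp [g]

lemma g_sub_left (x y z : V) : g (x - y) z = g x z - g y z := by
  simp [g]

lemma g_neg_left (x y : V) : g (-x) y = -g x y := by
  simp [g, inner_neg_left]

lemma g_neg_right (x y : V) : g x (-y) = -g x y := by
  simp [g, inner_neg_right]

lemma g_smul_left (r : ℝ) (x y : V) : g (r • x) y = r * g x y := by
  rw [g, RCLike.real_smul_eq_coe_smul (K := ℂ), inner_smul_left]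
  simp [g]

lemma g_smul_right (r : ℝ) (x y : V) : g x (r • y) = r * g x y := by
  rw [g, RCLike.real_smul_eq_coe_smul (K := ℂ), inner_smul_right]
  simp [g]

lemma g_I_smul_I_smul (x y : V) : g (Complex.I • x) (Complex.I • y) = g x y := by
  simp [g]

lemma g_I_smul_self (x : V) : g (Complex.I • x) x = 0 := by
  simp [g, Complex.conj_I, ← Complex.ofReal_pow]

lemma g_self (x : V) : g x x = ‖x‖ ^ 2 := by
  simp [g, ← Complex.ofReal_pow]

lemma g_map_left_of_involutive {A : V →ₗ[ℝ] V} (hA_invol : ∀ x, A (A x) = x)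
    (hA_herm : ∀ x y, (inner ℂ (A x) (A y) : ℂ) = inner ℂ y x) (x y : V) :
    g (A x) y = g x (A y) := by
  have h := congrArg Complex.re (hA_herm x (A y))
  rwa [hA_invol, ← g, ← g, g_comm (A y)] at h

end RealInner

section CommutesOn

variable {R M : Type*} [CommSemiring R] [AddCommGroup M] [Module R M]

def CommutesOn (P : M →ₗ[R] M) (s : Set M) (F : M → M) : Prop :=
  ∀ Y ∈ s, P (F Y) = F (P Y)

variable {P : M →ₗ[R] M} {s : Set M} {F G : M → M}

lemma commutesOn_id : CommutesOn P s fun Y => Y := fun _ _ => rfl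

lemma CommutesOn.add (hF : CommutesOn P s F) (hG : CommutesOn P s G) :
    CommutesOn P s fun Y => F Y + G Y := fun Y hY => by
  rw [map_add, hF Y hY, hG Y hY]

lemma CommutesOn.sub (hF : CommutesOn P s F) (hG : CommutesOn P s G) :
    CommutesOn P s fun Y => F Y - G Y := fun Y hY => by
  rw [map_sub, hF Y hY, hG Y hY]

lemma CommutesOn.const_smul (c : R) (hF : CommutesOn P s F) :
    CommutesOn P s fun Y => c • F Y := fun Y hY => by
  rw [map_smul, hF Y hY]

lemma CommutesOn.congr (hPs : Set.MapsTo P s s) (hFG : Set.EqOn F G s)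
    (hF : CommutesOn P s F) : CommutesOn P s G := fun Y hY => by
  rw [← hFG hY, hF Y hY, hFG (hPs hY)]

end CommutesOn

section NormalJacobi

variable [NormedAddCommGroup V] [InnerProductSpace ℂ V]

def normalJacobi (A : V →ₗ[ℝ] V) (ξ : V) : V →ₗ[ℝ] V where
  toFun := RNop A ξ
  map_add' x y := by
    simp only [RNop, map_add, g_add_left, mul_add, add_smul]
    abel
  map_smul' r x := by
    simp only [RNop, map_smul, g_smul_left, RingHom.id_apply, smul_add, smul_smul]
    ring_nf

variable {A : V →ₗ[ℝ] V} {ξ : V}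

@[simp]
lemma normalJacobi_apply (Y : V) : normalJacobi A ξ Y = RNop A ξ Y := rfl

lemma g_normalJacobi_left (hA : ∀ x y, g (A x) y = g x (A y)) (x y : V) :
    g (normalJacobi A ξ x) y = g x (normalJacobi A ξ y) := by
  simp only [normalJacobi_apply, RNop, g_add_left, g_add_right, g_smul_left, g_smul_right, hA]
  rw [g_comm ξ y]
  ring

lemma normalJacobi_map_comm (hA : ∀ x y, g (A x) y = g x (A y)) (hA_invol : ∀ x, A (A x) = x)
    (hAξ : A ξ = -ξ) (Y : V) : normalJacobi A ξ (A Y) = A (normalJacobi A ξ Y) := by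
  simp only [normalJacobi_apply, RNop, map_add, map_smul, hA_invol, hA _ ξ, hAξ, g_neg_right,
    smul_neg]
  module

lemma mem_eigenspace_normalJacobi {v : V} {ε : ℝ} (hvξ : g v ξ = 0) (hAv : A v = ε • v) :
    v ∈ Module.End.eigenspace (normalJacobi A ξ) (1 + ε) := by
  rw [Module.End.mem_eigenspace_iff, normalJacobi_apply, RNop, hvξ, hAv]
  module

lemma self_mem_eigenspace_normalJacobi (hAξ : A ξ = -ξ) :
    ξ ∈ Module.End.eigenspace (normalJacobi A ξ) (2 * g ξ ξ) := by
  rw [Module.End.mem_eigenspace_iff, normalJacobi_apply, RNop, hAξ]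
  module

lemma mapsTo_normalJacobi {N : V} (hA : ∀ x y, g (A x) y = g x (A y)) (hAN : A N = N)
    (hξN : g ξ N = 0) :
    Set.MapsTo (normalJacobi A ξ) {Y | g Y N = 0} {Y | g Y N = 0} := fun Y (hY : g Y N = 0) => by
  simp only [Set.mem_ofPred_eq, normalJacobi_apply, RNop, g_add_left, g_smul_left, hA, hAN, hY,
    hξN]
  ring

lemma commutesOn_normalJacobi_rankOne {s : Set V} {v : V} {c : ℝ}
    (hA : ∀ x y, g (A x) y = g x (A y))
    (hv : v ∈ Module.End.eigenspace (normalJacobi A ξ) c) :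
    CommutesOn (normalJacobi A ξ) s fun Y => g v Y • v := fun Y _ => by
  rw [Module.End.mem_eigenspace_iff] at hv
  dsimp only
  rw [map_smul, hv, ← g_normalJacobi_left hA, hv, g_smul_left, smul_smul, mul_comm]

end NormalJacobi

section TypeB

variable [NormedAddCommGroup V] [InnerProductSpace ℂ V] {A S : V →ₗ[ℝ] V} {N ξ : V}

lemma shape_apply {α lam : ℝ} (hA : ∀ x y, g (A x) y = g x (A y))
    (hA_invol : ∀ x, A (A x) = x) (hAN : A N = N) (hAξ : A ξ = -ξ) (hξN : g ξ N = 0)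
    (hξξ : g ξ ξ = 1) (hSξ : S ξ = α • ξ)
    (hSlam : ∀ X : V, g X N = 0 → g X ξ = 0 → A X = X → S X = lam • X)
    (hSmu : ∀ X : V, g X N = 0 → g X ξ = 0 → A X = -X → S X = 0)
    {Z : V} (hZ : g Z N = 0) :
    S Z = α • (g ξ Z • ξ) + (lam / 2) • (Z + A Z) := by
  have hAZN : g (A Z) N = 0 := by rw [hA, hAN, hZ]
  have hAZξ : g (A Z) ξ = -g Z ξ := by rw [hA, hAξ, g_neg_right]
  set Zlam := (1 / 2 : ℝ) • (Z + A Z)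
  set Zmu := Z - g Z ξ • ξ - Zlam
  have hlam : S Zlam = lam • Zlam := by
    apply hSlam
    · rw [g_smul_left, g_add_left, hZ, hAZN]; ring
    · rw [g_smul_left, g_add_left, hAZξ]; ring
    · rw [map_smul, map_add, hA_invol, add_comm]
  have hmu : S Zmu = 0 := by
    apply hSmu
    · rw [g_sub_left, g_sub_left, g_smul_left, g_smul_left, g_add_left, hZ, hAZN, hξN]; ring
    · rw [g_sub_left, g_sub_left, g_smul_left, g_smul_left, g_add_left, hξξ, hAZξ]; ring
    · rw [map_sub, map_sub, map_smul, map_smul, map_add, hA_invol, hAξ]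
      module
  calc S Z = S (g Z ξ • ξ + Zlam + Zmu) := by congr 1; simp only [Zmu]; abel
    _ = α • (g ξ Z • ξ) + (lam / 2) • (Z + A Z) := by
      rw [map_add, map_add, map_smul, hSξ, hlam, hmu, g_comm]
      module

lemma commutesOn_shape {α lam : ℝ} (hA : ∀ x y, g (A x) y = g x (A y))
    (hA_invol : ∀ x, A (A x) = x) (hAN : A N = N) (hAξ : A ξ = -ξ) (hξN : g ξ N = 0)
    (hξξ : g ξ ξ = 1) (hSξ : S ξ = α • ξ)
    (hSlam : ∀ X : V, g X N = 0 → g X ξ = 0 → A X = X → S X = lam • X)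
    (hSmu : ∀ X : V, g X N = 0 → g X ξ = 0 → A X = -X → S X = 0) :
    CommutesOn (normalJacobi A ξ) {Y | g Y N = 0} S := by
  refine CommutesOn.congr (mapsTo_normalJacobi hA hAN hξN)
    (fun Z hZ => (shape_apply hA hA_invol hAN hAξ hξN hξξ hSξ hSlam hSmu hZ).symm) ?_
  have hAcomm : CommutesOn (normalJacobi A ξ) {Y | g Y N = 0} A :=
    fun Y _ => normalJacobi_map_comm hA hA_invol hAξ Y
  exact (commutesOn_normalJacobi_rankOne hA (self_mem_eigenspace_normalJacobi hAξ)).const_smul α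
    |>.add ((commutesOn_id.add hAcomm).const_smul (lam / 2))

lemma commutesOn_RXop {s : Set V} {X : V} {ε σ : ℝ} (hA : ∀ x y, g (A x) y = g x (A y))
    (hA_invol : ∀ x, A (A x) = x) (hA_antiJ : ∀ x, A (Complex.I • x) = -(Complex.I • A x))
    (hAξ : A ξ = -ξ) (hS : CommutesOn (normalJacobi A ξ) s S)
    (hXξ : g X ξ = 0) (hIXξ : g (Complex.I • X) ξ = 0) (hAX : A X = ε • X)
    (hSX : S X = σ • X) :
    CommutesOn (normalJacobi A ξ) s (RXop A S X) := by
  have hIAX : Complex.I • A X = ε • (Complex.I • X) := by rw [hAX, smul_comm]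
  have hX := mem_eigenspace_normalJacobi hXξ hAX
  have hIX := mem_eigenspace_normalJacobi (ε := -ε) hIXξ (by rw [hA_antiJ, hIAX, neg_smul])
  have hAcomm : CommutesOn (normalJacobi A ξ) s A :=
    fun Y _ => normalJacobi_map_comm hA hA_invol hAξ Y
  have hR : RXop A S X = fun Y => g X X • Y - g X Y • X
      + (3 : ℝ) • (g (Complex.I • X) Y • (Complex.I • X)) + g (A X) X • A Y - g (A X) Y • A X
      - g (Complex.I • A X) Y • (Complex.I • A X)
      + g (S X) X • S Y - g (S X) Y • S X := by
    funext Y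
    rw [RXop, hA_antiJ, hIAX, g_smul_left, g_I_smul_self, mul_zero, zero_smul, add_zero, mul_smul,
      g_neg_left, neg_smul, ← sub_eq_add_neg]
  rw [hR, hIAX, hAX, hSX]
  have rankOne {v : V} {c : ℝ} (hv : v ∈ Module.End.eigenspace (normalJacobi A ξ) c) :=
    commutesOn_normalJacobi_rankOne (s := s) hA hv
  exact (commutesOn_id.const_smul _)
    |>.sub (rankOne hX)
    |>.add ((rankOne hIX).const_smul 3)
    |>.add (hAcomm.const_smul _)
    |>.sub (rankOne (Submodule.smul_mem _ ε hX))
    |>.sub (rankOne (Submodule.smul_mem _ ε hIX))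
    |>.add (hS.const_smul _)
    |>.sub (rankOne (Submodule.smul_mem _ σ hX))

end TypeB

theorem stmt_17_general [NormedAddCommGroup V] [InnerProductSpace ℂ V]
    (A : V →ₗ[ℝ] V)
    (hA_invol : ∀ x, A (A x) = x)
    (hA_antiJ : ∀ x, A (Complex.I • x) = -(Complex.I • A x))
    (hA_herm : ∀ x y, (inner ℂ (A x) (A y) : ℂ) = inner ℂ y x)
    (N : V) (hN : ‖N‖ = 1)
    (ξ : V) (hξ : ξ = -(Complex.I • N))
    (hAN : A N = N)
    (α lam : ℝ) (S : V →ₗ[ℝ] V)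
    (hSξ : S ξ = α • ξ)
    (hSlam : ∀ X : V, g X N = 0 → g X ξ = 0 → A X = X → S X = lam • X)
    (hSmu : ∀ X : V, g X N = 0 → g X ξ = 0 → A X = -X → S X = 0) :
    ∀ X : V, g X N = 0 → g X ξ = 0 → (A X = X ∨ A X = -X) →
      ∀ Y : V, g Y N = 0 →
        RNop A ξ (RXop A S X Y) = RXop A S X (RNop A ξ Y) := by
  intro X hXN hXξ hAX Y hYN
  have hA := g_map_left_of_involutive hA_invol hA_herm
  have hAξ : A ξ = -ξ := by rw [hξ, map_neg, hA_antiJ, hAN, neg_neg]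
  have hξN : g ξ N = 0 := by rw [hξ, g_neg_left, g_I_smul_self, neg_zero]
  have hξξ : g ξ ξ = 1 := by
    rw [hξ, g_neg_left, g_neg_right, neg_neg, g_I_smul_I_smul, g_self, hN, one_pow]
  have hIXξ : g (Complex.I • X) ξ = 0 := by
    rw [hξ, g_neg_right, g_I_smul_I_smul, hXN, neg_zero]
  obtain ⟨ε, σ, hε, hσ⟩ : ∃ ε σ : ℝ, A X = ε • X ∧ S X = σ • X := by
    rcases hAX with h | h
    · exact ⟨1, lam, by rw [h, one_smul], hSlam X hXN hXξ h⟩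
    · exact ⟨-1, 0, by rw [h, neg_one_smul], by rw [hSmu X hXN hXξ h, zero_smul]⟩
  exact commutesOn_RXop hA hA_invol hA_antiJ hAξ
    (commutesOn_shape hA hA_invol hAN hAξ hξN hξξ hSξ hSlam hSmu) hXξ hIXξ hε hσ Y hYN

/-- For the type-B tube model (`AN = N`, shape operator `S` with `Sξ = αξ`, `S = λ·id` on
`T_λ = {X ∈ C : AX = X}`, `S = 0` on `T_μ = {X ∈ C : AX = -X}`), the normal Jacobi
operator commutes with the Jacobi operator `R_X` for every `X ∈ T_λ ∪ T_μ`. -/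
theorem stmt_17 [NormedAddCommGroup V] [InnerProductSpace ℂ V]
    (A : V →ₗ[ℝ] V)
    (hA_invol : ∀ x, A (A x) = x)
    (hA_antiJ : ∀ x, A (Complex.I • x) = -(Complex.I • A x))
    (hA_herm : ∀ x y, (inner ℂ (A x) (A y) : ℂ) = inner ℂ y x)
    (N : V) (hN : ‖N‖ = 1)
    (ξ : V) (hξ : ξ = -(Complex.I • N))
    (hAN : A N = N)
    (α lam : ℝ) (S : V →ₗ[ℝ] V)
    (hS_tan : ∀ Y : V, g Y N = 0 → g (S Y) N = 0)
    (hSξ : S ξ = α • ξ)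
    (hSlam : ∀ X : V, g X N = 0 → g X ξ = 0 → A X = X → S X = lam • X)
    (hSmu : ∀ X : V, g X N = 0 → g X ξ = 0 → A X = -X → S X = 0) :
    ∀ X : V, g X N = 0 → g X ξ = 0 → (A X = X ∨ A X = -X) →
      ∀ Y : V, g Y N = 0 →
        RNop A ξ (RXop A S X Y) = RXop A S X (RNop A ξ Y) :=
  stmt_17_general A hA_invol hA_antiJ hA_herm N hN ξ hξ hAN α lam S hSξ hSlam hSmu
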